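/- In the discrete-time uniprocessor preemptive fixed-priority scheduling model, let C and C' be two execution-requirement assignments with C'(i,k) ≤ C(i,k) for every task i and job index k (releases, periods, phases and priorities being identical). For a priority threshold p ∈ ℕ and a time t ∈ ℕ, let W_C(p,t) denote the total remaining work at time t of all jobs of tasks with priority at least p that are released at or before t, i.e., the sum over such jobs of their requirement minus the service they have received during [r(i,k), t) under schedule σ_C. Then for every p and every t, W_{C'}(p,t) ≤ W_C(p,t). -/

import Mathlib

open scoped BigOperators

/-- Release time of the `k`-th job of task `i`: `r(i,k) = O i + k · T i`. -/
def release {ι : Type} (O T : ι → ℕ) (i : ι) (k : ℕ) : ℕ := O i + k * T i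

open Classical in
/-- Service received by job `j` during `[rel, t)` under schedule `σ`: the number of
instants in `[rel, t)` at which `σ` serves `j`. -/
noncomputable def service {ι : Type} (σ : ℕ → Option (ι × ℕ)) (rel : ℕ)
    (j : ι × ℕ) (t : ℕ) : ℕ :=
  ((Finset.Ico rel t).filter (fun u => σ u = some j)).card

/-- Job `j = (i,k)` is pending at time `t`: it is released at or before `t` and has
received strictly fewer units of service than its requirement during `[r(i,k), t)`. -/
def Pending {ι : Type} (O T : ι → ℕ) (C : ι → ℕ → ℕ) (σ : ℕ → Option (ι × ℕ))
    (j : ι × ℕ) (t : ℕ) : Prop :=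
  release O T j.1 j.2 ≤ t ∧ service σ (release O T j.1 j.2) j t < C j.1 j.2

/-- `σ` is the preemptive fixed-priority schedule for requirements `C`: at each instant `t`
it serves nothing if no job is pending, and otherwise serves a pending job of the task of
highest priority among tasks with a pending job, choosing among pending jobs of that task
one with earliest release time. -/
def IsFPSchedule {ι : Type} (π O T : ι → ℕ) (C : ι → ℕ → ℕ)
    (σ : ℕ → Option (ι × ℕ)) : Prop :=
  ∀ t : ℕ,
    ((¬ ∃ j, Pending O T C σ j t) → σ t = none) ∧
    ((∃ j, Pending O T C σ j t) →
      ∃ j, σ t = some j ∧ Pending O T C σ j t ∧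
        (∀ j', Pending O T C σ j' t → π j'.1 ≤ π j.1) ∧
        (∀ k' : ℕ, Pending O T C σ (j.1, k') t →
          release O T j.1 j.2 ≤ release O T j.1 k'))

/-- Start time of job `j` under schedule `σ`: the first instant at which `j` is served
(`⊤` if `j` is never served). -/
noncomputable def startTime {ι : Type} (σ : ℕ → Option (ι × ℕ)) (j : ι × ℕ) : ℕ∞ :=
  sInf {t : ℕ∞ | ∃ u : ℕ, t = (u : ℕ∞) ∧ σ u = some j}

/-- Finish time of job `j = (i,k)` under schedule `σ` with requirements `C`: the least `t`
such that `j` has received `C i k` units of service during `[r(i,k), t)` (`⊤` if no such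
instant exists). -/
noncomputable def finishTime {ι : Type} (O T : ι → ℕ) (C : ι → ℕ → ℕ)
    (σ : ℕ → Option (ι × ℕ)) (j : ι × ℕ) : ℕ∞ :=
  sInf {t : ℕ∞ | ∃ u : ℕ, t = (u : ℕ∞) ∧
    service σ (release O T j.1 j.2) j u = C j.1 j.2}

open Classical in
/-- Total remaining work `W_C(p,t)` at time `t` of all jobs of tasks with priority at
least `p` that are released at or before `t`: the sum over such jobs of their requirement
minus the service received during `[r(i,k), t)` under `σ`.  (With `T i ≥ 1`, every job
released at or before `t` has index `k ≤ t`, so the sum over `k ∈ range (t+1)` covers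
all released jobs.) -/
noncomputable def remWork {ι : Type} [Fintype ι] (π O T : ι → ℕ) (C : ι → ℕ → ℕ)
    (σ : ℕ → Option (ι × ℕ)) (p t : ℕ) : ℕ :=
  ∑ j ∈ (Finset.univ ×ˢ Finset.range (t + 1)).filter
      (fun j : ι × ℕ => p ≤ π j.1 ∧ release O T j.1 j.2 ≤ t),
    (C j.1 j.2 - service σ (release O T j.1 j.2) j t)


/-!
Under a fixed-priority schedule the backlog `W(p,t)` of jobs of priority at least `p` obeys
the recurrence `W(p,t+1) = (W(p,t) - 1) + A(p,t+1)`, where `A(p,t+1)` is the requirement of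
the jobs released at `t + 1`: whenever some such job is pending, the schedule serves one of
them. The map `w ↦ w - 1` is monotone and the arrivals `A` are monotone in the requirements,
so the inequality propagates by induction on `t`.
-/

open Finset

noncomputable def remaining {ι : Type} (O T : ι → ℕ) (C : ι → ℕ → ℕ)
    (σ : ℕ → Option (ι × ℕ)) (j : ι × ℕ) (t : ℕ) : ℕ :=
  C j.1 j.2 - service σ (release O T j.1 j.2) j t

open Classical in
noncomputable def jobsReleased {ι : Type} [Fintype ι] (π O T : ι → ℕ) (p t : ℕ) :
    Finset (ι × ℕ) :=
  (univ ×ˢ range (t + 1)).filter (fun j => p ≤ π j.1 ∧ release O T j.1 j.2 ≤ t)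

noncomputable def arrivalWork {ι : Type} [Fintype ι] (π O T : ι → ℕ) (C : ι → ℕ → ℕ)
    (p t : ℕ) : ℕ :=
  ∑ j ∈ (jobsReleased π O T p t).filter (fun j => release O T j.1 j.2 = t), C j.1 j.2

section

variable {ι : Type} {π O T : ι → ℕ} {C : ι → ℕ → ℕ} {σ : ℕ → Option (ι × ℕ)}

open Classical in
theorem service_succ {rel t : ℕ} (j : ι × ℕ) (h : rel ≤ t) :
    service σ rel j (t + 1) = service σ rel j t + if σ t = some j then 1 else 0 := by
  simp only [service]
  rw [Nat.Ico_succ_right_eq_insert_Ico h, filter_insert]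
  split_ifs
  · rw [card_insert_of_notMem (by simp)]
  · rfl

open Classical in
theorem remaining_succ {t : ℕ} (j : ι × ℕ) (h : release O T j.1 j.2 ≤ t) :
    remaining O T C σ j (t + 1) = remaining O T C σ j t - if σ t = some j then 1 else 0 := by
  rw [remaining, remaining, service_succ j h, Nat.sub_sub]

theorem remaining_of_release_eq {t : ℕ} {j : ι × ℕ} (h : release O T j.1 j.2 = t) :
    remaining O T C σ j t = C j.1 j.2 := by
  simp [remaining, service, h]

theorem pending_iff {j : ι × ℕ} {t : ℕ} :
    Pending O T C σ j t ↔ release O T j.1 j.2 ≤ t ∧ 0 < remaining O T C σ j t := by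
  simp [Pending, remaining]

theorem IsFPSchedule.exists_served (hσ : IsFPSchedule π O T C σ) {j : ι × ℕ} {t : ℕ}
    (hj : Pending O T C σ j t) :
    ∃ j₀, σ t = some j₀ ∧ Pending O T C σ j₀ t ∧ π j.1 ≤ π j₀.1 := by
  obtain ⟨j₀, hserved, hpending, hmax, -⟩ := (hσ t).2 ⟨j, hj⟩
  exact ⟨j₀, hserved, hpending, hmax j hj⟩

theorem sum_remaining_succ_of_served {S : Finset (ι × ℕ)} {t : ℕ} {j₀ : ι × ℕ}
    (hS : ∀ j ∈ S, release O T j.1 j.2 ≤ t) (hj₀ : j₀ ∈ S) (hserved : σ t = some j₀)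
    (hpos : 0 < remaining O T C σ j₀ t) :
    ∑ j ∈ S, remaining O T C σ j (t + 1) = ∑ j ∈ S, remaining O T C σ j t - 1 := by
  classical
  have hrest : ∀ j ∈ S.erase j₀, remaining O T C σ j (t + 1) = remaining O T C σ j t := by
    intro j hj
    rw [remaining_succ j (hS j (mem_of_mem_erase hj)), hserved,
      if_neg fun h => ne_of_mem_erase hj (Option.some.inj h).symm, Nat.sub_zero]
  rw [← add_sum_erase _ _ hj₀, ← add_sum_erase _ _ hj₀, sum_congr rfl hrest,
    remaining_succ j₀ (hS j₀ hj₀), if_pos hserved]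
  omega

theorem sum_remaining_succ_of_sum_eq_zero {S : Finset (ι × ℕ)} {t : ℕ}
    (hS : ∀ j ∈ S, release O T j.1 j.2 ≤ t) (h : ∑ j ∈ S, remaining O T C σ j t = 0) :
    ∑ j ∈ S, remaining O T C σ j (t + 1) = 0 := by
  refine sum_eq_zero fun j hj => Nat.eq_zero_of_le_zero ?_
  calc remaining O T C σ j (t + 1) ≤ remaining O T C σ j t := by
        rw [remaining_succ j (hS j hj)]; exact Nat.sub_le _ _
    _ = 0 := sum_eq_zero_iff.mp h j hj

theorem index_le_release (hT : ∀ i, 1 ≤ T i) (i : ι) (k : ℕ) : k ≤ release O T i k :=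
  (Nat.le_mul_of_pos_right k (hT i)).trans (Nat.le_add_left _ _)

variable [Fintype ι]

theorem mem_jobsReleased (hT : ∀ i, 1 ≤ T i) {p t : ℕ} {j : ι × ℕ} :
    j ∈ jobsReleased π O T p t ↔ p ≤ π j.1 ∧ release O T j.1 j.2 ≤ t := by
  have hk : j.2 ≤ release O T j.1 j.2 := index_le_release hT j.1 j.2
  simp only [jobsReleased, mem_filter, mem_product, mem_univ, mem_range, true_and]
  exact ⟨And.right, fun h => ⟨by omega, h⟩⟩

theorem release_le_of_mem_jobsReleased {p t : ℕ} {j : ι × ℕ}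
    (hj : j ∈ jobsReleased π O T p t) : release O T j.1 j.2 ≤ t :=
  (mem_filter.mp hj).2.2

theorem remWork_eq_sum_remaining (p t : ℕ) :
    remWork π O T C σ p t = ∑ j ∈ jobsReleased π O T p t, remaining O T C σ j t :=
  rfl

theorem remWork_zero (p : ℕ) : remWork π O T C σ p 0 = arrivalWork π O T C p 0 := by
  have hrel : ∀ j ∈ jobsReleased π O T p 0, release O T j.1 j.2 = 0 :=
    fun j hj => Nat.le_zero.mp (release_le_of_mem_jobsReleased hj)
  rw [remWork_eq_sum_remaining, arrivalWork, filter_true_of_mem hrel]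
  exact sum_congr rfl fun j hj => remaining_of_release_eq (hrel j hj)

theorem remWork_succ (hT : ∀ i, 1 ≤ T i) (p t : ℕ) :
    remWork π O T C σ p (t + 1) =
      ∑ j ∈ jobsReleased π O T p t, remaining O T C σ j (t + 1) +
        arrivalWork π O T C p (t + 1) := by
  have hold : (jobsReleased π O T p (t + 1)).filter (fun j => release O T j.1 j.2 ≤ t) =
      jobsReleased π O T p t := by
    ext j
    simp only [mem_filter, mem_jobsReleased hT]
    omega
  have hnew : (jobsReleased π O T p (t + 1)).filter (fun j => ¬release O T j.1 j.2 ≤ t) =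
      (jobsReleased π O T p (t + 1)).filter (fun j => release O T j.1 j.2 = t + 1) := by
    refine filter_congr fun j hj => ?_
    have := release_le_of_mem_jobsReleased hj
    omega
  rw [remWork_eq_sum_remaining, ← sum_filter_add_sum_filter_not _
    (fun j => release O T j.1 j.2 ≤ t), hold, hnew, arrivalWork]
  congr 1
  exact sum_congr rfl fun j hj => remaining_of_release_eq (mem_filter.mp hj).2

theorem IsFPSchedule.sum_remaining_succ (hσ : IsFPSchedule π O T C σ) (hT : ∀ i, 1 ≤ T i)
    (p t : ℕ) :
    ∑ j ∈ jobsReleased π O T p t, remaining O T C σ j (t + 1) = remWork π O T C σ p t - 1 := by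
  have hS : ∀ j ∈ jobsReleased π O T p t, release O T j.1 j.2 ≤ t :=
    fun j hj => release_le_of_mem_jobsReleased hj
  rw [remWork_eq_sum_remaining]
  by_cases h : ∑ j ∈ jobsReleased π O T p t, remaining O T C σ j t = 0
  · rw [h, sum_remaining_succ_of_sum_eq_zero hS h]
  obtain ⟨j, hj, hpos⟩ := exists_ne_zero_of_sum_ne_zero h
  obtain ⟨j₀, hserved, hpending, hprio⟩ :=
    hσ.exists_served (pending_iff.mpr ⟨hS j hj, Nat.pos_of_ne_zero hpos⟩)
  have hj₀ : j₀ ∈ jobsReleased π O T p t :=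
    (mem_jobsReleased hT).mpr ⟨((mem_jobsReleased hT).mp hj).1.trans hprio, hpending.1⟩
  exact sum_remaining_succ_of_served hS hj₀ hserved (pending_iff.mp hpending).2

theorem arrivalWork_mono {C' : ι → ℕ → ℕ} (hle : ∀ i k, C' i k ≤ C i k) (p t : ℕ) :
    arrivalWork π O T C' p t ≤ arrivalWork π O T C p t :=
  sum_le_sum fun j _ => hle j.1 j.2

end

theorem remaining_work_monotone_in_requirements_general {ι : Type} [Fintype ι]
    (π O T : ι → ℕ) (hT : ∀ i, 1 ≤ T i)
    (C C' : ι → ℕ → ℕ)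
    (hle : ∀ i k, C' i k ≤ C i k)
    (σ σ' : ℕ → Option (ι × ℕ))
    (hσ : IsFPSchedule π O T C σ) (hσ' : IsFPSchedule π O T C' σ') :
    ∀ (p t : ℕ), remWork π O T C' σ' p t ≤ remWork π O T C σ p t := by
  intro p t
  induction t with
  | zero =>
    rw [remWork_zero, remWork_zero]
    exact arrivalWork_mono hle p 0
  | succ t ih =>
    rw [remWork_succ hT, remWork_succ hT, hσ.sum_remaining_succ hT, hσ'.sum_remaining_succ hT]
    exact add_le_add (Nat.sub_le_sub_right ih 1) (arrivalWork_mono hle p (t + 1))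

/-- **Monotonicity of remaining higher-priority work in the execution requirements.**
If `C' ≤ C` pointwise (with identical releases, periods, phases and priorities), then for
every priority threshold `p` and every time `t`, the total remaining work of jobs of
priority at least `p` released at or before `t` is no larger under the fixed-priority
schedule for `C'` than under the one for `C`. -/
theorem remaining_work_monotone_in_requirements {ι : Type} [Fintype ι]
    (π O T : ι → ℕ) (hπ : Function.Injective π) (hT : ∀ i, 1 ≤ T i)
    (C C' : ι → ℕ → ℕ) (hC : ∀ i k, 1 ≤ C i k) (hC' : ∀ i k, 1 ≤ C' i k)
    (hle : ∀ i k, C' i k ≤ C i k)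
    (σ σ' : ℕ → Option (ι × ℕ))
    (hσ : IsFPSchedule π O T C σ) (hσ' : IsFPSchedule π O T C' σ') :
    ∀ (p t : ℕ), remWork π O T C' σ' p t ≤ remWork π O T C σ p t :=
  remaining_work_monotone_in_requirements_general π O T hT C C' hle σ σ' hσ hσ'
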